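/- Let n, d ≥ 1, χ ≥ 1, and let W ∈ ℝ^{n×n} satisfy W·1_n = 0, Wᵀ·1_n = 0, and ‖(W ⊗ I_d)v − v‖² ≤ (1 − 1/χ)‖v‖² for all v ∈ (ℝ^d)^n with Pv = v. Let r_yz > 0, α > 0, θ = 1/(2r_yz), let g, z̲ ∈ (ℝ^d)^n, and set z̄ = z̲ − θ·(W ⊗ I_d)g. Then 0 ≤ −α⁻¹·(⟨z̄ − z̲, g⟩ + r_yz‖z̄ − z̲‖²) − (4αχr_yz)⁻¹·‖g‖_P². -/

import Mathlib

/-!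
Write `u = P g` and `v = (W ⊗ I_d) g`. Since `W 1 = 0` and `Wᵀ 1 = 0`, the matrix `W ⊗ I_d` commutes
with the centering projection `P` and is absorbed by it on either side, so `v = (W ⊗ I_d) u`,
`P u = u` and `⟪v, g⟫ = ⟪v, u⟫`. With `θ = 1/(2 r_yz)` the expression equals
`(4 α r_yz)⁻¹ (2⟪v, u⟫ - ‖v‖² - χ⁻¹ ‖u‖²)`, and expanding the contraction hypothesis
`‖v - u‖² ≤ (1 - 1/χ) ‖u‖²` at `u` says exactly that the bracket is nonnegative.
-/

open scoped BigOperators RealInnerProductSpace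
open Matrix

noncomputable section

/-- The Kronecker product `W ⊗ I_d` as an `nd × nd` matrix. -/
def kron (n d : ℕ) (W : Matrix (Fin n) (Fin n) ℝ) :
    Matrix (Fin n × Fin d) (Fin n × Fin d) ℝ :=
  Matrix.kroneckerMap (· * ·) W (1 : Matrix (Fin d) (Fin d) ℝ)

/-- `P = (I_n − (1/n)·1_n·1_nᵀ) ⊗ I_d`, the orthogonal projection onto `L⊥`. -/
def projMat (n d : ℕ) : Matrix (Fin n × Fin d) (Fin n × Fin d) ℝ :=
  Matrix.kroneckerMap (· * ·)
    ((1 : Matrix (Fin n) (Fin n) ℝ) - (n : ℝ)⁻¹ • Matrix.of (fun _ _ => (1 : ℝ)))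
    (1 : Matrix (Fin d) (Fin d) ℝ)

/-- Matrix-vector multiplication on the Euclidean space `(ℝ^d)^n ≃ ℝ^{nd}`. -/
def mulVecE {n d : ℕ} (M : Matrix (Fin n × Fin d) (Fin n × Fin d) ℝ)
    (v : EuclideanSpace ℝ (Fin n × Fin d)) : EuclideanSpace ℝ (Fin n × Fin d) :=
  (WithLp.equiv 2 (Fin n × Fin d → ℝ)).symm (M.mulVec ((WithLp.equiv 2 (Fin n × Fin d → ℝ)) v))

/-- `‖v‖_P = ‖Pv‖`. -/
def pnorm {n d : ℕ} (v : EuclideanSpace ℝ (Fin n × Fin d)) : ℝ :=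
  ‖mulVecE (projMat n d) v‖

section AllOnes

variable {R : Type*} [NonAssocSemiring R] {l m o : Type*} [Fintype m]

lemma mul_allOnes_eq_zero {W : Matrix l m R} (h : W *ᵥ (fun _ => 1) = 0) :
    W * (of fun _ _ => 1 : Matrix m o R) = 0 := by
  ext i j
  simpa [mul_apply, mulVec, dotProduct] using congr_fun h i

lemma allOnes_mul_eq_zero {W : Matrix m o R} (h : Wᵀ *ᵥ (fun _ => 1) = 0) :
    (of fun _ _ => 1 : Matrix l m R) * W = 0 := by
  ext i j
  simpa [mul_apply, mulVec, dotProduct] using congr_fun h j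

lemma allOnes_mul_allOnes :
    (of fun _ _ => 1 : Matrix l m R) * (of fun _ _ => 1 : Matrix m o R) =
      (Fintype.card m : R) • of fun _ _ => 1 := by
  ext i j
  simp [mul_apply]

end AllOnes

section Centering

variable {K : Type*} [Field K] {n : ℕ}

def centeringMatrix (K : Type*) [Field K] (n : ℕ) : Matrix (Fin n) (Fin n) K :=
  1 - (n : K)⁻¹ • of fun _ _ => 1

lemma mul_centeringMatrix {W : Matrix (Fin n) (Fin n) K} (h : W *ᵥ (fun _ => 1) = 0) :
    W * centeringMatrix K n = W := by
  rw [centeringMatrix, Matrix.mul_sub, Matrix.mul_one, Matrix.mul_smul, mul_allOnes_eq_zero h,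
    smul_zero, sub_zero]

lemma centeringMatrix_mul {W : Matrix (Fin n) (Fin n) K} (h : Wᵀ *ᵥ (fun _ => 1) = 0) :
    centeringMatrix K n * W = W := by
  rw [centeringMatrix, Matrix.sub_mul, Matrix.one_mul, Matrix.smul_mul, allOnes_mul_eq_zero h,
    smul_zero, sub_zero]

lemma centeringMatrix_mul_self :
    centeringMatrix K n * centeringMatrix K n = centeringMatrix K n := by
  -- with the convention `(0 : K)⁻¹ = 0` this also holds when `n = 0` in `K`
  have hn : (n : K)⁻¹ * ((n : K)⁻¹ * n) = (n : K)⁻¹ := by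
    rcases eq_or_ne (n : K) 0 with h | h
    · simp [h]
    · field_simp
  simp only [centeringMatrix, Matrix.sub_mul, Matrix.mul_sub, Matrix.one_mul, Matrix.mul_one,
    Matrix.smul_mul, Matrix.mul_smul, allOnes_mul_allOnes, Fintype.card_fin, smul_sub, smul_smul,
    hn]
  abel

lemma centeringMatrix_transpose : (centeringMatrix K n)ᵀ = centeringMatrix K n := by
  ext i j
  simp [centeringMatrix, one_apply, eq_comm]

end Centering

section Kronecker

variable {n d : ℕ} {W : Matrix (Fin n) (Fin n) ℝ}

lemma projMat_eq_kronecker :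
    projMat n d = kroneckerMap (· * ·) (centeringMatrix ℝ n) (1 : Matrix (Fin d) (Fin d) ℝ) :=
  rfl

lemma kron_mul_projMat (h : W *ᵥ (fun _ => 1) = 0) : kron n d W * projMat n d = kron n d W := by
  rw [kron, projMat_eq_kronecker, ← mul_kronecker_mul, mul_centeringMatrix h, Matrix.mul_one]

lemma projMat_mul_kron (h : Wᵀ *ᵥ (fun _ => 1) = 0) : projMat n d * kron n d W = kron n d W := by
  rw [kron, projMat_eq_kronecker, ← mul_kronecker_mul, centeringMatrix_mul h, Matrix.mul_one]

lemma projMat_mul_self : projMat n d * projMat n d = projMat n d := by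
  rw [projMat_eq_kronecker, ← mul_kronecker_mul, centeringMatrix_mul_self, Matrix.mul_one]

lemma projMat_transpose : (projMat n d)ᵀ = projMat n d := by
  rw [projMat_eq_kronecker, ← kroneckerMap_transpose, centeringMatrix_transpose, transpose_one]

end Kronecker

section MulVecE

variable {n d : ℕ}

lemma mulVecE_mul (M N : Matrix (Fin n × Fin d) (Fin n × Fin d) ℝ)
    (v : EuclideanSpace ℝ (Fin n × Fin d)) :
    mulVecE (M * N) v = mulVecE M (mulVecE N v) := by
  simp [mulVecE, mulVec_mulVec]

lemma inner_mulVecE_left (M : Matrix (Fin n × Fin d) (Fin n × Fin d) ℝ)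
    (x y : EuclideanSpace ℝ (Fin n × Fin d)) :
    ⟪mulVecE M x, y⟫ = ⟪x, mulVecE Mᵀ y⟫ := by
  have h := M.toEuclideanLin_conjTranspose_eq_adjoint
  rw [conjTranspose_eq_transpose_of_trivial] at h
  exact (LinearMap.adjoint_inner_right (M.toEuclideanLin) x y).symm.trans
    (congrArg (⟪x, ·⟫) (LinearMap.congr_fun h y).symm)

end MulVecE

lemma inv_mul_norm_sq_le_of_norm_sub_sq_le {E : Type*} [NormedAddCommGroup E]
    [InnerProductSpace ℝ E] {χ : ℝ} {x u : E} (h : ‖x - u‖ ^ 2 ≤ (1 - 1 / χ) * ‖u‖ ^ 2) :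
    χ⁻¹ * ‖u‖ ^ 2 ≤ 2 * ⟪x, u⟫ - ‖x‖ ^ 2 := by
  rw [norm_sub_sq_real, one_div] at h
  linarith

theorem stmt14_general (n d : ℕ) (χ : ℝ)
    (W : Matrix (Fin n) (Fin n) ℝ)
    (h1 : W.mulVec (fun _ => 1) = 0)
    (h2 : Wᵀ.mulVec (fun _ => 1) = 0)
    (hW : ∀ v : EuclideanSpace ℝ (Fin n × Fin d), mulVecE (projMat n d) v = v →
      ‖mulVecE (kron n d W) v - v‖ ^ 2 ≤ (1 - 1 / χ) * ‖v‖ ^ 2)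
    (ryz α : ℝ) (hryz : 0 < ryz) (hα : 0 < α)
    (θ : ℝ) (hθ : θ = 1 / (2 * ryz))
    (g zu zb : EuclideanSpace ℝ (Fin n × Fin d))
    (hzb : zb = zu - θ • mulVecE (kron n d W) g) :
    0 ≤ -α⁻¹ * (⟪zb - zu, g⟫ + ryz * ‖zb - zu‖ ^ 2) - (4 * α * χ * ryz)⁻¹ * pnorm g ^ 2 := by
  set u := mulVecE (projMat n d) g
  set v := mulVecE (kron n d W) g
  have hPu : mulVecE (projMat n d) u = u := by rw [← mulVecE_mul, projMat_mul_self]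
  have hPv : mulVecE (projMat n d) v = v := by rw [← mulVecE_mul, projMat_mul_kron h2]
  have hvu : mulVecE (kron n d W) u = v := by rw [← mulVecE_mul, kron_mul_projMat h1]
  have hvg : ⟪v, g⟫ = ⟪v, u⟫ := by
    conv_lhs => rw [← hPv, inner_mulVecE_left, projMat_transpose]
  have hkey := inv_mul_norm_sq_le_of_norm_sub_sq_le (hvu ▸ hW u hPu)
  have hexpr : -α⁻¹ * (⟪zb - zu, g⟫ + ryz * ‖zb - zu‖ ^ 2) - (4 * α * χ * ryz)⁻¹ * pnorm g ^ 2 =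
      (4 * α * ryz)⁻¹ * (2 * ⟪v, u⟫ - ‖v‖ ^ 2 - χ⁻¹ * ‖u‖ ^ 2) := by
    rw [hzb, sub_sub_cancel_left, inner_neg_left, real_inner_smul_left, hvg, norm_neg,
      norm_smul, mul_pow, Real.norm_eq_abs, sq_abs, pnorm, hθ]
    field_simp
    ring
  rw [hexpr]
  exact mul_nonneg (by positivity) (by linarith)

theorem stmt14 (n d : ℕ) (hn : 1 ≤ n) (hd : 1 ≤ d) (χ : ℝ) (hχ : 1 ≤ χ)
    (W : Matrix (Fin n) (Fin n) ℝ)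
    (h1 : W.mulVec (fun _ => 1) = 0)
    (h2 : Wᵀ.mulVec (fun _ => 1) = 0)
    (hW : ∀ v : EuclideanSpace ℝ (Fin n × Fin d), mulVecE (projMat n d) v = v →
      ‖mulVecE (kron n d W) v - v‖ ^ 2 ≤ (1 - 1 / χ) * ‖v‖ ^ 2)
    (ryz α : ℝ) (hryz : 0 < ryz) (hα : 0 < α)
    (θ : ℝ) (hθ : θ = 1 / (2 * ryz))
    (g zu zb : EuclideanSpace ℝ (Fin n × Fin d))
    (hzb : zb = zu - θ • mulVecE (kron n d W) g) :
    0 ≤ -α⁻¹ * (⟪zb - zu, g⟫ + ryz * ‖zb - zu‖ ^ 2) - (4 * α * χ * ryz)⁻¹ * pnorm g ^ 2 :=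
  stmt14_general n d χ W h1 h2 hW ryz α hryz hα θ hθ g zu zb hzb

end
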